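/- arXiv:1710.02087 — 3 statements merged into one kernel-verified Lean document; each statement's English description precedes it below -/
import Mathlib

section
/- Let n ≥ 2. Assume (AL), and assume that every f ∈ S¹ can be written as f = Ψ ∘ g with Ψ ∈ S(ℂⁿ) and g ∈ S such that g(𝔹ⁿ) is Runge in ℂⁿ. Then every f ∈ S¹ is the limit, uniformly on compact subsets of 𝔹ⁿ, of a sequence of restrictions to 𝔹ⁿ of maps in S(ℂⁿ). -/
open Set Metric Filter

noncomputable section

/-- `E n` is `ℂⁿ` with the Euclidean norm. -/
abbrev E (n : ℕ) := EuclideanSpace ℂ (Fin n)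

/-- A map is univalent on `D` if it is holomorphic and injective on `D`. -/
def Univalent {n : ℕ} (f : E n → E n) (D : Set (E n)) : Prop :=
  DifferentiableOn ℂ f D ∧ Set.InjOn f D

/-- The class `S` of normalized univalent maps of the unit ball. -/
def classS (n : ℕ) : Set (E n → E n) :=
  {f | Univalent f (ball 0 1) ∧ f 0 = 0 ∧
    fderiv ℂ f 0 = ContinuousLinearMap.id ℂ (E n)}

/-- The class `S(ℂⁿ)` of normalized entire univalent maps. -/
def classSC (n : ℕ) : Set (E n → E n) :=
  {Ψ | Differentiable ℂ Ψ ∧ Function.Injective Ψ ∧ Ψ 0 = 0 ∧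
    fderiv ℂ Ψ 0 = ContinuousLinearMap.id ℂ (E n)}

/-- A normalized Loewner chain on the unit ball. -/
def IsLoewnerChain {n : ℕ} (f : ℝ → E n → E n) : Prop :=
  ContinuousOn (fun p : ℝ × E n => f p.1 p.2) (Ici 0 ×ˢ ball 0 1) ∧
  (∀ t, 0 ≤ t → Univalent (f t) (ball 0 1)) ∧
  (∀ s t, 0 ≤ s → s ≤ t → f s '' ball 0 1 ⊆ f t '' ball 0 1) ∧
  (∀ t, 0 ≤ t → f t 0 = 0 ∧
    fderiv ℂ (f t) 0 = (Real.exp t : ℂ) • ContinuousLinearMap.id ℂ (E n))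

/-- The class `S¹` of maps embedding into a normalized Loewner chain. -/
def classS1 (n : ℕ) : Set (E n → E n) :=
  {f | f ∈ classS n ∧ ∃ F : ℝ → E n → E n, IsLoewnerChain F ∧
    Set.EqOn (F 0) f (ball 0 1)}

/-- Uniform convergence on all compact subsets of `D`. -/
def ConvUnifOnCompacts {α β : Type*} [TopologicalSpace α] [UniformSpace β]
    (F : ℕ → α → β) (f : α → β) (D : Set α) : Prop :=
  ∀ K, K ⊆ D → IsCompact K → TendstoUniformlyOn F f atTop K

/-- `(D, Ω)` is a Runge pair. -/
def RungePair {n : ℕ} (D Ω : Set (E n)) : Prop :=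
  D ⊆ Ω ∧ ∀ h : E n → ℂ, DifferentiableOn ℂ h D →
    ∃ g : ℕ → E n → ℂ, (∀ k, DifferentiableOn ℂ (g k) Ω) ∧
      ConvUnifOnCompacts g h D

/-- `D` is Runge in `ℂⁿ`. -/
def IsRunge {n : ℕ} (D : Set (E n)) : Prop := RungePair D univ

/-- An automorphism of `ℂⁿ`. -/
def IsAutomorphism {n : ℕ} (Φ : E n → E n) : Prop :=
  Differentiable ℂ Φ ∧ Function.Bijective Φ

/-- A normalized automorphism of `ℂⁿ`. -/
def IsNormalizedAutomorphism {n : ℕ} (Φ : E n → E n) : Prop :=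
  IsAutomorphism Φ ∧ Φ 0 = 0 ∧ fderiv ℂ Φ 0 = ContinuousLinearMap.id ℂ (E n)

/-- `Ω` is biholomorphic to `ℂⁿ`. -/
def BiholToCn {n : ℕ} (Ω : Set (E n)) : Prop :=
  ∃ Ψ : E n → E n, Differentiable ℂ Ψ ∧ Function.Injective Ψ ∧ Set.range Ψ = Ω

/-- A Fatou–Bieberbach domain: a proper subdomain of `ℂⁿ` biholomorphic to `ℂⁿ`. -/
def IsFatouBieberbach {n : ℕ} (Ω : Set (E n)) : Prop :=
  Ω ≠ univ ∧ BiholToCn Ω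

/-- The rescaling `f_r(z) = (1/r) f (r z)`. -/
def rescale {n : ℕ} (f : E n → E n) (r : ℝ) (z : E n) : E n :=
  (r : ℂ)⁻¹ • f ((r : ℂ) • z)

/-- The Loewner range of a chain. -/
def LoewnerRange {n : ℕ} (f : ℝ → E n → E n) : Set (E n) :=
  ⋃ u ∈ Ici (0 : ℝ), f u '' ball 0 1

/-- (AL): the Andersén–Lempert approximation theorem for maps in `S` with Runge image. -/
def AL (n : ℕ) : Prop :=
  ∀ f ∈ classS n, IsRunge (f '' ball 0 1) →
    ∃ Φ : ℕ → E n → E n, (∀ k, IsNormalizedAutomorphism (Φ k)) ∧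
      ConvUnifOnCompacts Φ f (ball (0 : E n) 1)

/-- (AL'): every univalent map of the ball with Runge image is approximable by
automorphisms of `ℂⁿ`. -/
def AL' (n : ℕ) : Prop :=
  ∀ g : E n → E n, Univalent g (ball 0 1) → IsRunge (g '' ball 0 1) →
    ∃ Φ : ℕ → E n → E n, (∀ k, IsAutomorphism (Φ k)) ∧
      ConvUnifOnCompacts Φ g (ball (0 : E n) 1)

/-- (AL-nec): a map in `S` approximable by automorphisms of `ℂⁿ` has Runge image. -/
def ALnec (n : ℕ) : Prop :=
  ∀ f ∈ classS n,
    (∃ Φ : ℕ → E n → E n, (∀ k, IsAutomorphism (Φ k)) ∧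
      ConvUnifOnCompacts Φ f (ball (0 : E n) 1)) →
    IsRunge (f '' ball 0 1)

/-- [GAL]: every `f ∈ S` with non-Runge image is approximable by entire univalent maps. -/
def GAL (n : ℕ) : Prop :=
  ∀ f ∈ classS n, ¬ IsRunge (f '' ball 0 1) →
    ∃ Ψ : ℕ → E n → E n, (∀ k, Differentiable ℂ (Ψ k) ∧ Function.Injective (Ψ k)) ∧
      ConvUnifOnCompacts Ψ f (ball (0 : E n) 1)

/-- [EXT]: every `f ∈ S` extending univalently past the closed ball is in `S¹`. -/
def EXT (n : ℕ) : Prop :=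
  ∀ f ∈ classS n,
    (∃ r > (1 : ℝ), ∃ F : E n → E n, Univalent F (ball 0 r) ∧
      Set.EqOn F f (ball 0 1)) →
    f ∈ classS1 n

/-- [FBR]: every domain biholomorphic to the ball and not Runge in `ℂⁿ` sits in a
Fatou–Bieberbach domain in a Runge way. -/
def FBR (n : ℕ) : Prop :=
  ∀ D : Set (E n), IsOpen D →
    (∃ g : E n → E n, Univalent g (ball 0 1) ∧ g '' ball 0 1 = D) →
    ¬ IsRunge D →
    ∃ Ω : Set (E n), IsFatouBieberbach Ω ∧ D ⊆ Ω ∧ RungePair D Ω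

/-- [GALˢ]: strong generalized Andersén–Lempert. -/
def GALs (n : ℕ) : Prop :=
  ∀ f ∈ classS n, ¬ IsRunge (f '' ball 0 1) →
    ∃ Ω : Set (E n), IsFatouBieberbach Ω ∧
      ∃ Ψ : ℕ → E n → E n, (∀ k, Ψ k ∈ classSC n ∧ Set.range (Ψ k) = Ω) ∧
        ConvUnifOnCompacts Ψ f (ball (0 : E n) 1)

/-- [FBRₐ]. -/
def FBRa (n : ℕ) : Prop :=
  ∀ f ∈ classS n, ∀ r ∈ Ioo (0 : ℝ) 1,
    ∃ Ω : Set (E n), BiholToCn Ω ∧ f '' ball 0 r ⊆ Ω ∧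
      RungePair (f '' ball 0 r) Ω

/-- [GALₐˢ]. -/
def GALas (n : ℕ) : Prop :=
  ∀ f ∈ classS n, ¬ IsRunge (f '' ball 0 1) → ∀ r ∈ Ioo (0 : ℝ) 1,
    ∃ Ω : Set (E n), IsFatouBieberbach Ω ∧
      ∃ Ψ : ℕ → E n → E n, (∀ k, Ψ k ∈ classSC n ∧ Set.range (Ψ k) = Ω) ∧
        ConvUnifOnCompacts Ψ (rescale f r) (ball (0 : E n) 1)

/-- A domain is entire-convexshapelike if some entire univalent map pulls it back to
a convex set. -/
def EntireConvexshapelike {n : ℕ} (Ω : Set (E n)) : Prop :=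
  ∃ Ψ : E n → E n, Differentiable ℂ Ψ ∧ Function.Injective Ψ ∧
    Ω ⊆ Set.range Ψ ∧ Convex ℝ (Ψ ⁻¹' Ω)

/-- `S¹` is dense in `S` for uniform convergence on compacta. -/
def DenseS1 (n : ℕ) : Prop :=
  ∀ f ∈ classS n, ∃ g : ℕ → E n → E n, (∀ k, g k ∈ classS1 n) ∧
    ConvUnifOnCompacts g f (ball (0 : E n) 1)
/-- assuming (AL) and the decomposition `S¹ = S(ℂⁿ) ∘ S_R`, every map in
`S¹` is approximable on compacta of the ball by maps of `S(ℂⁿ)`. -/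
theorem stmt1 (n : ℕ) (hn : 2 ≤ n) (hAL : AL n)
    (hdec : ∀ f ∈ classS1 n, ∃ Ψ ∈ classSC n, ∃ g ∈ classS n,
      IsRunge (g '' ball 0 1) ∧ Set.EqOn f (Ψ ∘ g) (ball 0 1)) :
    ∀ f ∈ classS1 n, ∃ Ψ : ℕ → E n → E n, (∀ k, Ψ k ∈ classSC n) ∧
      ConvUnifOnCompacts Ψ f (ball (0 : E n) 1) := by
  intro f hf
  obtain ⟨Ψ, hΨ, g, hg, hR, heq⟩ := hdec f hf
  obtain ⟨Φ, hΦ, hconv⟩ := hAL g hg hR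
  obtain ⟨hΨd, hΨi, hΨ0, hΨf⟩ := hΨ
  refine ⟨fun k => Ψ ∘ Φ k, ?_, ?_⟩
  · intro k
    obtain ⟨⟨hΦd, hΦb⟩, hΦ0, hΦf⟩ := hΦ k
    refine ⟨hΨd.comp hΦd, hΨi.comp hΦb.injective,
      by simp [Function.comp, hΦ0, hΨ0], ?_⟩
    rw [fderiv_comp 0 (hΨd _) (hΦd 0), hΦ0, hΨf,
      hΦf, ContinuousLinearMap.id_comp]
  · intro K hK hKc
    have hg_cont : ContinuousOn g K := (hg.1.1.mono hK).continuousOn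
    have hC : IsCompact (g '' K) := hKc.image_of_continuousOn hg_cont
    set T := Metric.cthickening 1 (g '' K) with hT
    have hTc : IsCompact T := hC.cthickening
    have hΨuc : UniformContinuousOn Ψ T :=
      hTc.uniformContinuousOn_of_continuous hΨd.continuous.continuousOn
    rw [Metric.tendstoUniformlyOn_iff]
    intro ε hε
    rw [Metric.uniformContinuousOn_iff] at hΨuc
    obtain ⟨δ, hδ, hδ'⟩ := hΨuc ε hε
    have h1 := (Metric.tendstoUniformlyOn_iff.mp (hconv K hK hKc)) (min δ 1)
      (lt_min hδ one_pos)
    filter_upwards [h1] with k hk x hx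
    have hd := hk x hx
    have hgx : g x ∈ g '' K := mem_image_of_mem g hx
    have hgxT : g x ∈ T := Metric.self_subset_cthickening _ hgx
    have hΦxT : Φ k x ∈ T := by
      apply Metric.mem_cthickening_of_dist_le (Φ k x) (g x) 1 _ hgx
      rw [dist_comm]
      exact le_trans hd.le (min_le_right _ _)

    have hfx : f x = Ψ (g x) := heq (hK hx)
    have : dist (g x) (Φ k x) < δ := lt_of_lt_of_le hd (min_le_left _ _)
    calc dist (f x) ((Ψ ∘ Φ k) x) = dist (Ψ (g x)) (Ψ (Φ k x)) := by
          rw [hfx]; rfl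
      _ < ε := hδ' _ hgxT _ hΦxT this
end
end

section
/- Let n ≥ 2. If [EXT] holds, then S¹ is dense in S for the topology of uniform convergence on compact subsets of 𝔹ⁿ: every f ∈ S is the limit, uniformly on compact subsets of 𝔹ⁿ, of a sequence of maps in S¹ (indeed of the rescalings f_{r_k} for any sequence r_k ∈ (0,1) with r_k → 1). -/
open Set Metric Filter

noncomputable section

open Topology
open scoped Pointwise

/-! For `0 < r < 1` the rescaling `f_r(z) = r⁻¹ f(rz)` is again normalized and is univalent on
the ball of radius `r⁻¹ > 1`, so [EXT] puts it in `S¹`. As `r → 1` it converges to `f` uniformly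
on each compact `K ⊆ 𝔹ⁿ`, because `(r, z) ↦ r⁻¹ f(rz)` is jointly continuous on `(0,1] × K`. -/

theorem IsCompact.tendstoUniformlyOn_of_continuousOn_prod {α β γ : Type*} [TopologicalSpace α]
    [TopologicalSpace β] [UniformSpace γ] {F : α → β → γ} {s : Set α} {K : Set β} {q : α}
    (hK : IsCompact K) (hF : ContinuousOn F.uncurry (s ×ˢ K)) (hq : q ∈ s) :
    TendstoUniformlyOn F (F q) (𝓝[s] q) K := by
  intro u hu
  obtain ⟨v, hv, hvu⟩ := hK.mem_uniformity_of_prod hF hq (symm_le_uniformity hu)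
  exact Filter.mem_of_superset hv hvu

section Rescale

variable {n : ℕ}

theorem mapsTo_ofReal_smul_ball {r R : ℝ} (hr : 0 < r) :
    MapsTo (fun z : E n => (r : ℂ) • z) (ball 0 (R / r)) (ball 0 R) := by
  intro z hz
  have hr0 : (r : ℂ) ≠ 0 := Complex.ofReal_ne_zero.mpr hr.ne'
  have : (r : ℂ) • z ∈ (r : ℂ) • ball (0 : E n) (R / r) := smul_mem_smul_set hz
  rwa [_root_.smul_ball hr0, smul_zero, Complex.norm_real, Real.norm_of_nonneg hr.le,
    mul_div_cancel₀ R hr.ne'] at this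

theorem rescale_one (f : E n → E n) : rescale f 1 = f := by
  ext1 z
  simp [rescale]

theorem hasFDerivAt_rescale {f : E n → E n} {L : E n →L[ℂ] E n} {r : ℝ} {z : E n}
    (hr : r ≠ 0) (hf : HasFDerivAt f L ((r : ℂ) • z)) : HasFDerivAt (rescale f r) L z := by
  have hr0 : (r : ℂ) ≠ 0 := Complex.ofReal_ne_zero.mpr hr
  have h := (hf.comp z ((hasFDerivAt_id z).const_smul (r : ℂ))).const_smul (r : ℂ)⁻¹
  rwa [ContinuousLinearMap.comp_smul, ContinuousLinearMap.comp_id, smul_smul,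
    inv_mul_cancel₀ hr0, one_smul] at h

theorem univalent_rescale {f : E n → E n} {R r : ℝ} (hf : Univalent f (ball 0 R)) (hr : 0 < r) :
    Univalent (rescale f r) (ball 0 (R / r)) := by
  have hr0 : (r : ℂ) ≠ 0 := Complex.ofReal_ne_zero.mpr hr.ne'
  have hmaps := mapsTo_ofReal_smul_ball (n := n) (R := R) hr
  refine ⟨?_, ?_⟩
  · exact (hf.1.comp (differentiableOn_id.const_smul (r : ℂ)) hmaps).const_smul (r : ℂ)⁻¹
  · exact (smul_right_injective (E n) (inv_ne_zero hr0)).comp_injOn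
      (hf.2.comp (smul_right_injective (E n) hr0).injOn hmaps)

theorem rescale_mem_classS {f : E n → E n} (hf : f ∈ classS n) {r : ℝ} (hr : r ∈ Ioc 0 1) :
    rescale f r ∈ classS n := by
  obtain ⟨hfu, hf0, hfd⟩ := hf
  have hball : ball (0 : E n) 1 ⊆ ball 0 (1 / r) :=
    ball_subset_ball (one_le_one_div hr.1 hr.2)
  have hfu' := univalent_rescale hfu hr.1
  have hderiv : HasFDerivAt f (ContinuousLinearMap.id ℂ (E n)) ((r : ℂ) • (0 : E n)) := by
    rw [smul_zero, ← hfd]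
    exact (hfu.1.differentiableAt (isOpen_ball.mem_nhds (mem_ball_self one_pos))).hasFDerivAt
  refine ⟨⟨hfu'.1.mono hball, hfu'.2.mono hball⟩, ?_, (hasFDerivAt_rescale hr.1.ne' hderiv).fderiv⟩
  simp [rescale, hf0]

theorem tendstoUniformlyOn_rescale {f : E n → E n} (hf : ContinuousOn f (ball 0 1))
    {K : Set (E n)} (hKball : K ⊆ ball 0 1) (hK : IsCompact K) :
    TendstoUniformlyOn (rescale f) f (𝓝[Ioc 0 1] 1) K := by
  have hcont : ContinuousOn (rescale f).uncurry (Ioc 0 1 ×ˢ K) := by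
    have hr_cont : Continuous fun p : ℝ × E n => (p.1 : ℂ) :=
      Complex.continuous_ofReal.comp continuous_fst
    refine (hr_cont.continuousOn.inv₀ ?_).smul (hf.comp (hr_cont.smul continuous_snd).continuousOn ?_)
    · rintro ⟨r, z⟩ ⟨hr, -⟩
      exact Complex.ofReal_ne_zero.mpr hr.1.ne'
    · rintro ⟨r, z⟩ ⟨hr, hz⟩
      exact mapsTo_ofReal_smul_ball hr.1 (ball_subset_ball (one_le_one_div hr.1 hr.2) (hKball hz))
  simpa only [rescale_one] using
    hK.tendstoUniformlyOn_of_continuousOn_prod hcont (right_mem_Ioc.mpr one_pos)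

end Rescale

theorem stmt4_general (n : ℕ) (hEXT : EXT n) :
    ∀ f ∈ classS n, ∀ r : ℕ → ℝ, (∀ k, r k ∈ Ioo (0 : ℝ) 1) →
      Tendsto r atTop (nhds 1) →
      (∀ k, rescale f (r k) ∈ classS1 n) ∧
      ConvUnifOnCompacts (fun k => rescale f (r k)) f (ball (0 : E n) 1) := by
  intro f hf r hr hr_lim
  constructor
  · intro k
    refine hEXT _ (rescale_mem_classS hf (Ioo_subset_Ioc_self (hr k)))
      ⟨1 / r k, (one_lt_div (hr k).1).mpr (hr k).2, rescale f (r k),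
        univalent_rescale hf.1 (hr k).1, eqOn_refl _ _⟩
  · intro K hKball hK u hu
    have hr_within : Tendsto r atTop (𝓝[Ioc 0 1] 1) :=
      tendsto_nhdsWithin_iff.mpr ⟨hr_lim, Eventually.of_forall fun k => Ioo_subset_Ioc_self (hr k)⟩
    exact hr_within.eventually (tendstoUniformlyOn_rescale hf.1.1.continuousOn hKball hK u hu)

/-- [EXT] implies that `S¹` is dense in `S`; indeed, for every `f ∈ S`
and every sequence `r_k ∈ (0,1)` with `r_k → 1` the rescalings `f_{r_k}` lie in `S¹`
and converge to `f` uniformly on compacta of the ball. -/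
theorem stmt4 (n : ℕ) (hn : 2 ≤ n) (hEXT : EXT n) :
    ∀ f ∈ classS n, ∀ r : ℕ → ℝ, (∀ k, r k ∈ Ioo (0 : ℝ) 1) →
      Tendsto r atTop (nhds 1) →
      (∀ k, rescale f (r k) ∈ classS1 n) ∧
      ConvUnifOnCompacts (fun k => rescale f (r k)) f (ball (0 : E n) 1) :=
  stmt4_general n hEXT
end
end

section
/- Let n ≥ 2. Assume (AL). If S¹ is closed in S under uniform convergence on compact subsets of 𝔹ⁿ (that is, whenever a sequence in S¹ converges uniformly on compacta of 𝔹ⁿ to some f ∈ S, then f ∈ S¹), then every f ∈ S with f(𝔹ⁿ) Runge belongs to S¹. -/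
open Set Metric Filter

noncomputable section

lemma smul_fderiv_aux {n : ℕ} (Φ : E n → E n) (hdiff : Differentiable ℂ Φ)
    (h0 : Φ 0 = 0) (hd : fderiv ℂ Φ 0 = ContinuousLinearMap.id ℂ (E n)) (c : ℂ) :
    fderiv ℂ (fun z : E n => Φ (c • z)) 0
      = c • ContinuousLinearMap.id ℂ (E n) := by
  set L : E n →L[ℂ] E n := c • ContinuousLinearMap.id ℂ (E n) with hL
  have hfun : (fun z : E n => Φ (c • z)) = Φ ∘ L := rfl
  rw [hfun, fderiv_comp 0 (hdiff _) L.differentiableAt]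
  have hL0 : L (0 : E n) = 0 := by simp [hL]
  rw [hL0, hd, L.fderiv, ContinuousLinearMap.id_comp]

lemma normalizedAut_mem_S1 {n : ℕ} (Φ : E n → E n)
    (h : IsNormalizedAutomorphism Φ) : Φ ∈ classS1 n := by
  obtain ⟨⟨hdiff, hbij⟩, h0, hd⟩ := h
  have hinj : Function.Injective Φ := hbij.injective
  refine ⟨⟨⟨hdiff.differentiableOn, hinj.injOn⟩, h0, hd⟩,
    fun t z => Φ ((Real.exp t : ℂ) • z), ⟨?_, ?_, ?_, ?_⟩, fun z _ => by simp⟩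
  · exact (hdiff.continuous.comp
      ((Complex.continuous_ofReal.comp (Real.continuous_exp.comp
        continuous_fst)).smul continuous_snd)).continuousOn
  · intro t _
    refine ⟨(hdiff.comp (((Real.exp t : ℂ) • ContinuousLinearMap.id ℂ (E n)).differentiable)).differentiableOn, ?_⟩
    intro x _ y _ hxy
    have h1 := hinj hxy
    have hc : ((Real.exp t : ℝ) : ℂ) ≠ 0 := by
      exact_mod_cast (Real.exp_pos t).ne'
    exact smul_right_injective (E n) hc h1
  · rintro s t hs hst _ ⟨z, hz, rfl⟩
    refine ⟨(Real.exp (s - t) : ℂ) • z, ?_, ?_⟩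
    · simp only [mem_ball, dist_zero_right] at hz ⊢
      rw [norm_smul]
      have h1 : ‖((Real.exp (s - t) : ℝ) : ℂ)‖ = Real.exp (s - t) := by
        rw [Complex.norm_real, Real.norm_eq_abs, abs_of_pos (Real.exp_pos _)]
      rw [h1]
      calc Real.exp (s - t) * ‖z‖ ≤ 1 * ‖z‖ := by
            apply mul_le_mul_of_nonneg_right _ (norm_nonneg z)
            exact Real.exp_le_one_iff.mpr (by linarith)
        _ = ‖z‖ := one_mul _
        _ < 1 := hz
    · show Φ ((Real.exp t : ℂ) • ((Real.exp (s - t) : ℂ) • z))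
          = Φ ((Real.exp s : ℂ) • z)
      congr 1
      rw [smul_smul, ← Complex.ofReal_mul, ← Real.exp_add]
      norm_num
  · intro t _
    refine ⟨by simp [h0], ?_⟩
    exact smul_fderiv_aux Φ hdiff h0 hd _

/-- assuming (AL), if `S¹` is closed in `S` under uniform convergence
on compacta, then every `f ∈ S` with Runge image belongs to `S¹`. -/
theorem stmt11 (n : ℕ) (hn : 2 ≤ n) (hAL : AL n)
    (hclosed : ∀ g : ℕ → E n → E n, (∀ k, g k ∈ classS1 n) →
      ∀ f ∈ classS n, ConvUnifOnCompacts g f (ball (0 : E n) 1) → f ∈ classS1 n) :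
    ∀ f ∈ classS n, IsRunge (f '' ball 0 1) → f ∈ classS1 n := by
  intro f hf hR
  obtain ⟨Φ, hΦ, hconv⟩ := hAL f hf hR
  exact hclosed Φ (fun k => normalizedAut_mem_S1 (Φ k) (hΦ k)) f hf hconv
end
end
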